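/- arXiv:2207.12989 — 5 statements merged into one kernel-verified Lean document; each statement's English description precedes it below -/
import Mathlib

section
/- For every positive integer r there is a constant C = C(r) > 0 such that for every prime p, every complex number z with |z| ≤ 1, and all complex numbers s, w, α₁,…,α_r with Re(s+α_j) ≥ 1/2 for every j and Re(w) ≥ 1/2, one has |(2/π)∫₀^π ∏_{j=1}^r (1 − 2p^{−(s+α_j)} cos θ + p^{−2(s+α_j)})⁻¹ · (1 − 2z p^{−w} cos θ + z²p^{−2w})⁻¹ · sin²θ dθ − 1 − ∑_{i=1}^{r} z·p^{−(s+w+α_i)} − ∑_{1≤i<j≤r} p^{−(2s+α_i+α_j)} − ∑_{1≤i≤j≤r} z²·p^{−(2s+2w+α_i+α_j)}| ≤ C·p^{−3/2}. -/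
/-!
Expand `C(X;θ) = (1 - 2X cos θ + X²)⁻¹ = ∑ₖ Uₖ(cos θ) Xᵏ`, where the Chebyshev polynomials `Uₖ` of
the second kind are orthonormal for `(2/π) sin² θ dθ` on `[0, π]`. The variables
`p^{-(s+αⱼ)}` and `z p^{-w}` all have size at most `ε = p^{-1/2} ≤ 3/4`, so uniformly in `θ` the
product of the factors is, up to `O(ε³)`, its part of degree `≤ 2` in the variables, namely
`1 + e₂ + e₁ U₁ + (p₂ + e₂) U₂` (elementary symmetric `e₁, e₂`, power sum `p₂`, and `U₁² = U₂ + 1`).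
Integration kills `U₁` and `U₂` and leaves `1 + e₂`; for these variables `e₂` is exactly
`∑ᵢ z p^{-(s+w+αᵢ)} + ∑_{i<j} p^{-(2s+αᵢ+αⱼ)}`, while the last sum of the statement is `O(p^{-2})`.
-/

open Finset Real intervalIntegral
open scoped Complex

/-- The factor `C(X;θ)`. -/
noncomputable def localFactor (X : ℂ) (θ : ℝ) : ℂ := (1 - 2 * X * (cos θ : ℂ) + X ^ 2)⁻¹

theorem one_sub_two_mul_cos_add_sq (X : ℂ) (θ : ℝ) :
    1 - 2 * X * (cos θ : ℂ) + X ^ 2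
      = (1 - X * cexp (θ * Complex.I)) * (1 - X * cexp (-(θ * Complex.I))) := by
  have hprod : cexp (θ * Complex.I) * cexp (-(θ * Complex.I)) = 1 := by
    rw [← Complex.exp_add]; simp
  have hsum : cexp (θ * Complex.I) + cexp (-(θ * Complex.I)) = 2 * (cos θ : ℂ) := by
    rw [Complex.ofReal_cos, Complex.cos]; ring_nf
  linear_combination X * hsum - X ^ 2 * hprod

theorem sq_one_sub_norm_le_norm_one_sub_two_mul_cos_add_sq {X : ℂ} (hX : ‖X‖ ≤ 1) (θ : ℝ) :
    (1 - ‖X‖) ^ 2 ≤ ‖1 - 2 * X * (cos θ : ℂ) + X ^ 2‖ := by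
  have key (φ : ℝ) : 1 - ‖X‖ ≤ ‖1 - X * cexp (φ * Complex.I)‖ := by
    simpa [Complex.norm_exp_ofReal_mul_I] using
      norm_sub_norm_le (1 : ℂ) (X * cexp (φ * Complex.I))
  have h₂ := key (-θ)
  rw [Complex.ofReal_neg, neg_mul] at h₂
  rw [one_sub_two_mul_cos_add_sq, norm_mul, sq]
  exact mul_le_mul (key θ) h₂ (by linarith) (norm_nonneg _)

theorem one_sub_two_mul_cos_add_sq_ne_zero {X : ℂ} (hX : ‖X‖ < 1) (θ : ℝ) :
    1 - 2 * X * (cos θ : ℂ) + X ^ 2 ≠ 0 := by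
  refine norm_pos_iff.mp (lt_of_lt_of_le ?_
    (sq_one_sub_norm_le_norm_one_sub_two_mul_cos_add_sq hX.le θ))
  nlinarith

theorem continuous_localFactor {X : ℂ} (hX : ‖X‖ < 1) : Continuous (localFactor X) :=
  Continuous.inv₀ (by fun_prop) (one_sub_two_mul_cos_add_sq_ne_zero hX)

theorem norm_ofReal_cos_le_one (θ : ℝ) : ‖(cos θ : ℂ)‖ ≤ 1 := by
  rw [Complex.norm_real, norm_eq_abs]; exact abs_cos_le_one θ

theorem norm_localFactor_le {X : ℂ} (hX : ‖X‖ ≤ 3 / 4) (θ : ℝ) : ‖localFactor X θ‖ ≤ 16 := by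
  have h := sq_one_sub_norm_le_norm_one_sub_two_mul_cos_add_sq (hX.trans (by norm_num)) θ
  have h16 : (1 / 16 : ℝ) ≤ (1 - ‖X‖) ^ 2 := by nlinarith [norm_nonneg X]
  rw [localFactor, norm_inv, inv_le_comm₀ (by linarith) (by norm_num)]
  linarith

theorem norm_two_mul_mul_cos_sub_sq_le {X : ℂ} (hX : ‖X‖ ≤ 1) (θ : ℝ) :
    ‖2 * X * (cos θ : ℂ) - X ^ 2‖ ≤ 3 * ‖X‖ := by
  have hc := norm_ofReal_cos_le_one θ
  calc ‖2 * X * (cos θ : ℂ) - X ^ 2‖ ≤ 2 * ‖X‖ * ‖(cos θ : ℂ)‖ + ‖X‖ ^ 2 := by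
        refine (norm_sub_le _ _).trans_eq ?_
        simp only [norm_mul, norm_pow, Complex.norm_ofNat]
    _ ≤ 3 * ‖X‖ := by nlinarith [norm_nonneg X]

theorem norm_two_mul_mul_cos_le (X : ℂ) (θ : ℝ) : ‖2 * X * (cos θ : ℂ)‖ ≤ 2 * ‖X‖ := by
  rw [norm_mul, norm_mul, Complex.norm_ofNat]
  nlinarith [norm_ofReal_cos_le_one θ, norm_nonneg X]

theorem localFactor_sub_one {X : ℂ} (hX : ‖X‖ < 1) (θ : ℝ) :
    localFactor X θ - 1 = (2 * X * (cos θ : ℂ) - X ^ 2) * localFactor X θ := by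
  have hD := one_sub_two_mul_cos_add_sq_ne_zero hX θ
  rw [localFactor]
  field_simp
  ring

theorem localFactor_sub_quadratic {X : ℂ} (hX : ‖X‖ < 1) (θ : ℝ) :
    localFactor X θ - (1 + 2 * X * (cos θ : ℂ) + X ^ 2 * (4 * (cos θ : ℂ) ^ 2 - 1))
      = (2 * X * (cos θ : ℂ) - X ^ 2) ^ 3 * localFactor X θ
        + X ^ 3 * (X - 4 * (cos θ : ℂ)) := by
  have hD := one_sub_two_mul_cos_add_sq_ne_zero hX θ
  rw [localFactor]
  field_simp
  ring

theorem norm_localFactor_sub_one_le {X : ℂ} (hX : ‖X‖ ≤ 3 / 4) (θ : ℝ) :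
    ‖localFactor X θ - 1‖ ≤ 48 * ‖X‖ := by
  rw [localFactor_sub_one (by linarith) θ, norm_mul]
  nlinarith [norm_two_mul_mul_cos_sub_sq_le (X := X) (by linarith) θ, norm_localFactor_le hX θ,
    norm_nonneg (localFactor X θ), norm_nonneg X]

theorem norm_localFactor_sub_quadratic_le {X : ℂ} (hX : ‖X‖ ≤ 3 / 4) (θ : ℝ) :
    ‖localFactor X θ - (1 + 2 * X * (cos θ : ℂ) + X ^ 2 * (4 * (cos θ : ℂ) ^ 2 - 1))‖
      ≤ 437 * ‖X‖ ^ 3 := by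
  rw [localFactor_sub_quadratic (by linarith) θ]
  have hq : ‖(2 * X * (cos θ : ℂ) - X ^ 2) ^ 3‖ ≤ (3 * ‖X‖) ^ 3 := by
    rw [norm_pow]
    exact pow_le_pow_left₀ (norm_nonneg _) (norm_two_mul_mul_cos_sub_sq_le (by linarith) θ) 3
  have hr : ‖X - 4 * (cos θ : ℂ)‖ ≤ 5 := by
    have hc := norm_ofReal_cos_le_one θ
    calc ‖X - 4 * (cos θ : ℂ)‖ ≤ ‖X‖ + 4 * ‖(cos θ : ℂ)‖ := by
          simpa using norm_sub_le X (4 * (cos θ : ℂ))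
      _ ≤ 5 := by linarith
  calc _ ≤ ‖(2 * X * (cos θ : ℂ) - X ^ 2) ^ 3‖ * ‖localFactor X θ‖
        + ‖X‖ ^ 3 * ‖X - 4 * (cos θ : ℂ)‖ := by
        refine (norm_add_le _ _).trans_eq ?_
        simp only [norm_mul, norm_pow]
    _ ≤ (3 * ‖X‖) ^ 3 * 16 + ‖X‖ ^ 3 * 5 := by
        gcongr
        exact norm_localFactor_le hX θ
    _ = 437 * ‖X‖ ^ 3 := by ring

theorem norm_localFactor_sub_one_sub_linear_le {X : ℂ} (hX : ‖X‖ ≤ 3 / 4) (θ : ℝ) :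
    ‖localFactor X θ - 1 - 2 * X * (cos θ : ℂ)‖ ≤ 442 * ‖X‖ ^ 2 := by
  have hc := norm_ofReal_cos_le_one θ
  have h5 : ‖4 * (cos θ : ℂ) ^ 2 - 1‖ ≤ 5 := (norm_sub_le _ _).trans (by
    simp only [norm_mul, norm_pow, Complex.norm_ofNat, norm_one]
    nlinarith [norm_nonneg (cos θ : ℂ)])
  have hb : ‖X ^ 2 * (4 * (cos θ : ℂ) ^ 2 - 1)‖ ≤ 5 * ‖X‖ ^ 2 := by
    rw [norm_mul, norm_pow, mul_comm 5]
    exact mul_le_mul_of_nonneg_left h5 (by positivity)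
  have hcube : ‖X‖ ^ 3 ≤ ‖X‖ ^ 2 := pow_le_pow_of_le_one (norm_nonneg X) (by linarith) (by norm_num)
  calc _ = ‖X ^ 2 * (4 * (cos θ : ℂ) ^ 2 - 1) + (localFactor X θ
        - (1 + 2 * X * (cos θ : ℂ) + X ^ 2 * (4 * (cos θ : ℂ) ^ 2 - 1)))‖ := by ring_nf
    _ ≤ 5 * ‖X‖ ^ 2 + 437 * ‖X‖ ^ 3 :=
      (norm_add_le _ _).trans (add_le_add hb (norm_localFactor_sub_quadratic_le hX θ))
    _ ≤ 442 * ‖X‖ ^ 2 := by linarith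

theorem norm_sum_le_card_mul {ι E : Type*} [SeminormedAddCommGroup E] {s : Finset ι} {f : ι → E}
    {B : ℝ} (h : ∀ t ∈ s, ‖f t‖ ≤ B) : ‖∑ t ∈ s, f t‖ ≤ #s * B := by
  simpa using norm_sum_le_of_le s h

theorem norm_sum_sum_Ici_le {ι E : Type*} [LinearOrder ι] [Fintype ι] [LocallyFiniteOrderTop ι]
    [SeminormedAddCommGroup E] {f : ι → ι → E} {B : ℝ} (hf : ∀ i j, ‖f i j‖ ≤ B) :
    ‖∑ i, ∑ j ∈ Ici i, f i j‖ ≤ Fintype.card ι ^ 2 * B := by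
  rcases isEmpty_or_nonempty ι with hι | ⟨⟨i₀⟩⟩
  · simp
  have hB : 0 ≤ B := (norm_nonneg _).trans (hf i₀ i₀)
  have hrow (i : ι) : ‖∑ j ∈ Ici i, f i j‖ ≤ Fintype.card ι * B :=
    (norm_sum_le_card_mul fun j _ => hf i j).trans
      (mul_le_mul_of_nonneg_right (by exact_mod_cast card_le_univ _) hB)
  simpa [sq, mul_assoc] using norm_sum_le_card_mul fun i (_ : i ∈ univ) => hrow i

theorem sq_sum_eq_sum_sq_add_two_mul_sum_Ioi {ι R : Type*} [LinearOrder ι] [Fintype ι]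
    [LocallyFiniteOrderTop ι] [LocallyFiniteOrderBot ι] [CommSemiring R] (f : ι → R) :
    (∑ i, f i) ^ 2 = ∑ i, f i ^ 2 + 2 * ∑ i, ∑ j ∈ Ioi i, f i * f j := by
  have hswap : ∑ i, ∑ j ∈ Ioi i, f i * f j = ∑ i, ∑ j ∈ Iio i, f i * f j := by
    rw [sum_comm' (t' := univ) (s' := fun j => Iio j) (by simp)]
    simp only [mul_comm]
  have hrow (i : ι) :
      ∑ j, f i * f j = ∑ j ∈ Iio i, f i * f j + (f i ^ 2 + ∑ j ∈ Ioi i, f i * f j) := by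
    classical
    have huniv : (univ : Finset ι) = Iio i ∪ Ici i := by ext j; simp [lt_or_ge]
    rw [huniv, sum_union (disjoint_left.2 fun j hj hj' => (mem_Iio.1 hj).not_ge (mem_Ici.1 hj')),
      Ici_eq_cons_Ioi, sum_cons, sq]
  rw [sq, sum_mul_sum, sum_congr rfl fun i _ => hrow i, sum_add_distrib, sum_add_distrib, ← hswap]
  ring

noncomputable def esymm₂ {ι : Type*} (s : Finset ι) (u : ι → ℂ) : ℂ :=
  ((∑ t ∈ s, u t) ^ 2 - ∑ t ∈ s, u t ^ 2) / 2

theorem esymm₂_insert {ι : Type*} [DecidableEq ι] {s : Finset ι} {x : ι} (hx : x ∉ s)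
    (u : ι → ℂ) : esymm₂ (insert x s) u = esymm₂ s u + u x * ∑ t ∈ s, u t := by
  simp only [esymm₂, sum_insert hx]
  ring

theorem esymm₂_univ_eq_sum_Ioi {ι : Type*} [LinearOrder ι] [Fintype ι] [LocallyFiniteOrderTop ι]
    [LocallyFiniteOrderBot ι] (f : ι → ℂ) : esymm₂ univ f = ∑ i, ∑ j ∈ Ioi i, f i * f j := by
  rw [esymm₂, sq_sum_eq_sum_sq_add_two_mul_sum_Ioi]
  ring

theorem esymm₂_univ_option {ι : Type*} [Fintype ι] (y : ℂ) (x : ι → ℂ) :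
    esymm₂ univ (fun o : Option ι => o.elim y x) = esymm₂ univ x + y * ∑ i, x i := by
  simp only [esymm₂, Fintype.sum_option, Option.elim]
  ring

theorem norm_esymm₂_sub_le {ι : Type*} {s : Finset ι} {u v : ι → ℂ} {μ δ : ℝ}
    (hu : ∀ t ∈ s, ‖u t‖ ≤ μ) (hv : ∀ t ∈ s, ‖v t‖ ≤ μ) (huv : ∀ t ∈ s, ‖u t - v t‖ ≤ δ) :
    ‖esymm₂ s u - esymm₂ s v‖ ≤ #s * (#s + 1) * μ * δ := by
  have hsum (t) (ht : t ∈ s) : ‖u t + v t‖ ≤ 2 * μ := by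
    linarith [norm_add_le (u t) (v t), hu t ht, hv t ht]
  have hdiff : ‖∑ t ∈ s, (u t - v t)‖ ≤ #s * δ := norm_sum_le_card_mul huv
  have hadd : ‖∑ t ∈ s, (u t + v t)‖ ≤ #s * (2 * μ) := norm_sum_le_card_mul hsum
  have hsq : ‖∑ t ∈ s, (u t - v t) * (u t + v t)‖ ≤ #s * (δ * (2 * μ)) :=
    norm_sum_le_card_mul fun t ht => by
      rw [norm_mul]
      exact mul_le_mul (huv t ht) (hsum t ht) (norm_nonneg _) ((norm_nonneg _).trans (huv t ht))
  have hid : esymm₂ s u - esymm₂ s v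
      = ((∑ t ∈ s, (u t - v t)) * (∑ t ∈ s, (u t + v t))
        - ∑ t ∈ s, (u t - v t) * (u t + v t)) / 2 := by
    have hsq' : ∑ t ∈ s, (u t - v t) * (u t + v t) = ∑ t ∈ s, u t ^ 2 - ∑ t ∈ s, v t ^ 2 := by
      rw [← sum_sub_distrib]
      exact sum_congr rfl fun t _ => by ring
    rw [hsq']
    simp only [esymm₂, sum_sub_distrib, sum_add_distrib]
    ring
  have hprod := mul_le_mul hdiff hadd (norm_nonneg _) ((norm_nonneg _).trans hdiff)
  calc ‖esymm₂ s u - esymm₂ s v‖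
      ≤ (‖∑ t ∈ s, (u t - v t)‖ * ‖∑ t ∈ s, (u t + v t)‖
        + ‖∑ t ∈ s, (u t - v t) * (u t + v t)‖) / 2 := by
        rw [hid, norm_div, Complex.norm_two, ← norm_mul]
        gcongr
        exact norm_sub_le _ _
    _ ≤ #s * (#s + 1) * μ * δ := by linarith

theorem norm_prod_one_add_sub_le {ι : Type*} (s : Finset ι) (u : ι → ℂ) {μ : ℝ} (hμ : 0 ≤ μ)
    (hu : ∀ t ∈ s, ‖u t‖ ≤ μ) :
    ‖∏ t ∈ s, (1 + u t) - (1 + ∑ t ∈ s, u t + esymm₂ s u)‖ ≤ #s ^ 3 * (1 + μ) ^ #s * μ ^ 3 := by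
  classical
  induction s using Finset.induction_on with
  | empty => simp [esymm₂]
  | @insert x s hx ih =>
    have hux : ‖u x‖ ≤ μ := hu x (mem_insert_self x s)
    have hus : ∀ t ∈ s, ‖u t‖ ≤ μ := fun t ht => hu t (mem_insert_of_mem ht)
    have hE : ‖esymm₂ s u‖ ≤ #s * (#s + 1) * μ * μ := by
      simpa [esymm₂] using
        norm_esymm₂_sub_le (v := 0) hus (by simpa using fun _ _ => hμ) (by simpa using hus)
    have hstep : ‖(1 + u x) * ∏ t ∈ s, (1 + u t) - (1 + (u x + ∑ t ∈ s, u t)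
          + (esymm₂ s u + u x * ∑ t ∈ s, u t))‖
        ≤ (1 + μ) * (#s ^ 3 * (1 + μ) ^ #s * μ ^ 3) + μ * (#s * (#s + 1) * μ * μ) := by
      calc _ = ‖(1 + u x) * (∏ t ∈ s, (1 + u t) - (1 + ∑ t ∈ s, u t + esymm₂ s u))
            + u x * esymm₂ s u‖ := by ring_nf
        _ ≤ ‖1 + u x‖ * ‖∏ t ∈ s, (1 + u t) - (1 + ∑ t ∈ s, u t + esymm₂ s u)‖
            + ‖u x‖ * ‖esymm₂ s u‖ := by
          rw [← norm_mul, ← norm_mul]; exact norm_add_le _ _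
        _ ≤ _ := by
          gcongr
          · exact (norm_add_le _ _).trans (by rw [norm_one]; linarith)
          · exact ih hus
    rw [prod_insert hx, sum_insert hx, esymm₂_insert hx, card_insert_of_notMem hx]
    refine hstep.trans ?_
    have hpow : 1 ≤ (1 + μ) ^ (#s + 1) := one_le_pow₀ (by linarith)
    have hcoef : (#s * (#s + 1) : ℝ) ≤ (#s + 1) ^ 3 - #s ^ 3 := by nlinarith
    push_cast
    rw [pow_succ (1 + μ)] at hpow ⊢
    nlinarith [mul_le_mul hcoef hpow (by norm_num) (by nlinarith), pow_nonneg hμ 3]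

/-- The part of degree `≤ 2` of `∏ₜ C(Xₜ;θ)`, in the basis `U₀ = 1`, `U₁ = 2 cos θ`,
`U₂ = 4 cos² θ - 1`. -/
noncomputable def secondOrderPart {ι : Type*} [Fintype ι] (X : ι → ℂ) (θ : ℝ) : ℂ :=
  1 + esymm₂ univ X + (∑ t, X t) * (2 * (cos θ : ℂ))
    + (∑ t, X t ^ 2 + esymm₂ univ X) * (4 * (cos θ : ℂ) ^ 2 - 1)

theorem secondOrderPart_eq {ι : Type*} [Fintype ι] (X : ι → ℂ) (θ : ℝ) :
    secondOrderPart X θ = 1 + ∑ t, 2 * X t * (cos θ : ℂ)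
      + ∑ t, X t ^ 2 * (4 * (cos θ : ℂ) ^ 2 - 1)
      + esymm₂ univ (fun t => 2 * X t * (cos θ : ℂ)) := by
  simp only [secondOrderPart, esymm₂, ← sum_mul, ← mul_sum, mul_pow, mul_right_comm _ (X _)]
  ring

theorem exists_norm_prod_localFactor_sub_secondOrderPart_le (ι : Type*) [Fintype ι] :
    ∃ K, 0 ≤ K ∧ ∀ ε, 0 ≤ ε → ε ≤ 3 / 4 → ∀ X : ι → ℂ, (∀ t, ‖X t‖ ≤ ε) → ∀ θ,
      ‖∏ t, localFactor (X t) θ - secondOrderPart X θ‖ ≤ K * ε ^ 3 := by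
  set n : ℕ := Fintype.card ι
  refine ⟨n ^ 3 * 37 ^ n * 48 ^ 3 + 437 * n + 48 * 442 * (n * (n + 1)), by positivity,
    fun ε hε0 hε X hX θ => ?_⟩
  set u : ι → ℂ := fun t => localFactor (X t) θ - 1
  set a : ι → ℂ := fun t => 2 * X t * (cos θ : ℂ)
  set E : ι → ℂ := fun t => localFactor (X t) θ
    - (1 + 2 * X t * (cos θ : ℂ) + X t ^ 2 * (4 * (cos θ : ℂ) ^ 2 - 1))
  have hX34 (t) : ‖X t‖ ≤ 3 / 4 := (hX t).trans hε
  have hu (t) (_ : t ∈ univ) : ‖u t‖ ≤ 48 * ε :=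
    (norm_localFactor_sub_one_le (hX34 t) θ).trans (by linarith [hX t])
  have ha (t) (_ : t ∈ univ) : ‖a t‖ ≤ 48 * ε :=
    (norm_two_mul_mul_cos_le (X t) θ).trans (by linarith [hX t, norm_nonneg (X t)])
  have hua (t) (_ : t ∈ univ) : ‖u t - a t‖ ≤ 442 * ε ^ 2 :=
    (norm_localFactor_sub_one_sub_linear_le (hX34 t) θ).trans (by gcongr; exact hX t)
  have hE (t) : ‖E t‖ ≤ 437 * ε ^ 3 :=
    (norm_localFactor_sub_quadratic_le (hX34 t) θ).trans (by gcongr; exact hX t)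
  have hsplit : ∏ t, localFactor (X t) θ - secondOrderPart X θ
      = (∏ t, (1 + u t) - (1 + ∑ t, u t + esymm₂ univ u)) + ∑ t, E t
        + (esymm₂ univ u - esymm₂ univ a) := by
    rw [secondOrderPart_eq]
    simp only [u, a, E, sum_sub_distrib, sum_add_distrib, add_sub_cancel]
    ring
  have h1 := norm_prod_one_add_sub_le univ u (by positivity) hu
  have h2 : ‖∑ t, E t‖ ≤ n * (437 * ε ^ 3) := norm_sum_le_card_mul fun t _ => hE t
  have h3 := norm_esymm₂_sub_le hu ha hua
  have h1' : (n : ℝ) ^ 3 * (1 + 48 * ε) ^ n * (48 * ε) ^ 3 ≤ n ^ 3 * 37 ^ n * 48 ^ 3 * ε ^ 3 := by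
    rw [mul_pow, ← mul_assoc]
    gcongr
    linarith
  rw [card_univ] at h1 h3
  rw [hsplit]
  refine norm_add₃_le.trans ?_
  nlinarith [pow_nonneg hε0 3]

theorem integral_four_mul_cos_sq_sub_one_mul_sin_sq :
    ∫ θ in (0:ℝ)..π, (4 * cos θ ^ 2 - 1) * sin θ ^ 2 = 0 := by
  have hfun : (fun θ => (4 * cos θ ^ 2 - 1) * sin θ ^ 2)
      = fun θ => 4 * (sin θ ^ 2 * cos θ ^ 2) - sin θ ^ 2 := by
    funext θ; ring
  have hsin : sin (4 * π) = 0 := by exact_mod_cast sin_nat_mul_pi 4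
  rw [hfun, integral_sub ((by fun_prop : Continuous _).intervalIntegrable _ _)
    ((by fun_prop : Continuous _).intervalIntegrable _ _)]
  simp [integral_sin_sq, hsin]
  ring

theorem two_div_pi_mul_integral_chebyshev_mul_sin_sq (a b c : ℂ) :
    2 / (π : ℂ) * ∫ θ in (0:ℝ)..π,
      (a + b * (2 * (cos θ : ℂ)) + c * (4 * (cos θ : ℂ) ^ 2 - 1)) * (sin θ : ℂ) ^ 2 = a := by
  have h₀ : ∫ θ in (0:ℝ)..π, sin θ ^ 2 = π / 2 := by simp [integral_sin_sq]
  have h₁ : ∫ θ in (0:ℝ)..π, 2 * cos θ * sin θ ^ 2 = 0 := by simp [mul_assoc, mul_comm (cos _)]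
  have hfun : (fun θ : ℝ =>
        (a + b * (2 * (cos θ : ℂ)) + c * (4 * (cos θ : ℂ) ^ 2 - 1)) * (sin θ : ℂ) ^ 2)
      = fun θ => a * ((sin θ ^ 2 : ℝ) : ℂ) + b * ((2 * cos θ * sin θ ^ 2 : ℝ) : ℂ)
          + c * (((4 * cos θ ^ 2 - 1) * sin θ ^ 2 : ℝ) : ℂ) := by
    funext θ; push_cast; ring
  have hint (f : ℝ → ℝ) (hf : Continuous f) (d : ℂ) :
      IntervalIntegrable (fun θ => d * (f θ : ℂ)) MeasureTheory.volume 0 π :=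
    (by fun_prop : Continuous _).intervalIntegrable _ _
  rw [hfun, integral_add ((hint _ (by fun_prop) a).add (hint _ (by fun_prop) b))
    (hint _ (by fun_prop) c), integral_add (hint _ (by fun_prop) a) (hint _ (by fun_prop) b)]
  simp only [integral_const_mul, integral_ofReal, h₀, h₁,
    integral_four_mul_cos_sq_sub_one_mul_sin_sq]
  have : (π : ℂ) ≠ 0 := Complex.ofReal_ne_zero.2 pi_ne_zero
  field_simp
  push_cast
  ring

theorem norm_two_div_pi_mul_integral_mul_sin_sq_le {f : ℝ → ℂ} {B : ℝ} (hf : ∀ θ, ‖f θ‖ ≤ B) :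
    ‖2 / (π : ℂ) * ∫ θ in (0:ℝ)..π, f θ * (sin θ : ℂ) ^ 2‖ ≤ 2 * B := by
  have hB : 0 ≤ B := (norm_nonneg _).trans (hf 0)
  have hbound (θ : ℝ) (_ : θ ∈ Set.uIoc 0 π) : ‖f θ * (sin θ : ℂ) ^ 2‖ ≤ B := by
    rw [norm_mul, norm_pow, Complex.norm_real, norm_eq_abs, sq_abs]
    nlinarith [hf θ, norm_nonneg (f θ), sin_sq_le_one θ, sq_nonneg (sin θ)]
  have h := norm_integral_le_of_norm_le_const hbound
  rw [sub_zero, abs_of_pos pi_pos] at h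
  rw [norm_mul, norm_div, Complex.norm_two, Complex.norm_real, norm_eq_abs, abs_of_pos pi_pos]
  calc 2 / π * ‖∫ θ in (0:ℝ)..π, f θ * (sin θ : ℂ) ^ 2‖ ≤ 2 / π * (B * π) := by gcongr
    _ = 2 * B := by field_simp

theorem exists_norm_integral_prod_localFactor_sub_le (ι : Type*) [Fintype ι] :
    ∃ K, 0 ≤ K ∧ ∀ ε, 0 ≤ ε → ε ≤ 3 / 4 → ∀ X : ι → ℂ, (∀ t, ‖X t‖ ≤ ε) →
      ‖2 / (π : ℂ) * (∫ θ in (0:ℝ)..π, (∏ t, localFactor (X t) θ) * (sin θ : ℂ) ^ 2)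
        - (1 + esymm₂ univ X)‖ ≤ K * ε ^ 3 := by
  obtain ⟨K, hK, hpointwise⟩ := exists_norm_prod_localFactor_sub_secondOrderPart_le ι
  refine ⟨2 * K, by positivity, fun ε hε0 hε X hX => ?_⟩
  have hcont : Continuous fun θ => ∏ t, localFactor (X t) θ :=
    continuous_finsetProd _ fun t _ => continuous_localFactor (by linarith [hX t])
  have hsecond : Continuous (secondOrderPart X) := by unfold secondOrderPart; fun_prop
  have hmain : 2 / (π : ℂ) * ∫ θ in (0:ℝ)..π, secondOrderPart X θ * (sin θ : ℂ) ^ 2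
      = 1 + esymm₂ univ X :=
    two_div_pi_mul_integral_chebyshev_mul_sin_sq _ _ _
  rw [← hmain, ← mul_sub, ← integral_sub ((by fun_prop : Continuous _).intervalIntegrable _ _)
    ((by fun_prop : Continuous _).intervalIntegrable _ _)]
  simp only [← sub_mul]
  have := norm_two_div_pi_mul_integral_mul_sin_sq_le (hpointwise ε hε0 hε X hX)
  linarith

theorem exists_norm_integral_twisted_sub_le (ι : Type*) [LinearOrder ι] [Fintype ι]
    [LocallyFiniteOrderTop ι] [LocallyFiniteOrderBot ι] :
    ∃ K, 0 ≤ K ∧ ∀ ε, 0 ≤ ε → ε ≤ 3 / 4 → ∀ (x : ι → ℂ) (y : ℂ), (∀ i, ‖x i‖ ≤ ε) → ‖y‖ ≤ ε →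
      ‖2 / (π : ℂ) * (∫ θ in (0:ℝ)..π,
          (∏ i, localFactor (x i) θ) * localFactor y θ * (sin θ : ℂ) ^ 2)
        - 1 - y * ∑ i, x i - ∑ i, ∑ j ∈ Ioi i, x i * x j‖ ≤ K * ε ^ 3 := by
  obtain ⟨K, hK, hest⟩ := exists_norm_integral_prod_localFactor_sub_le (Option ι)
  refine ⟨K, hK, fun ε hε0 hε x y hx hy => ?_⟩
  have h := hest ε hε0 hε (fun o => o.elim y x) (by rintro (_ | i) <;> simp [hx, hy])
  rw [esymm₂_univ_option, esymm₂_univ_eq_sum_Ioi] at h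
  simp only [Fintype.prod_option, Option.elim_none, Option.elim_some,
    mul_comm (localFactor y _)] at h
  convert h using 2
  ring

theorem norm_natCast_cpow_neg_le {p : ℕ} (hp : 1 ≤ p) {s : ℂ} {a : ℝ} (h : a ≤ s.re) :
    ‖(p : ℂ) ^ (-s)‖ ≤ (p : ℝ) ^ (-a) := by
  rw [Complex.norm_natCast_cpow_of_pos hp, Complex.neg_re]
  exact rpow_le_rpow_of_exponent_le (by exact_mod_cast hp) (by linarith)

theorem rpow_neg_one_half_le {x : ℝ} (hx : 2 ≤ x) : x ^ (-(1 / 2) : ℝ) ≤ 3 / 4 := by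
  have hsq : (x ^ (-(1 / 2) : ℝ)) ^ 2 = x⁻¹ := by
    rw [← rpow_natCast, ← rpow_mul (by linarith)]
    norm_num [rpow_neg_one]
  have : x⁻¹ ≤ 1 / 2 := by rw [inv_eq_one_div]; gcongr
  nlinarith [rpow_nonneg (by linarith : (0 : ℝ) ≤ x) (-(1 / 2) : ℝ)]

theorem cpow_neg_of_eq_add {x a b c : ℂ} (hx : x ≠ 0) (h : c = a + b) :
    x ^ (-c) = x ^ (-a) * x ^ (-b) := by
  rw [h, neg_add, Complex.cpow_add _ _ hx]

theorem norm_sum_sum_Ici_sq_mul_natCast_cpow_le {r p : ℕ} (hp : 1 ≤ p) {z s w : ℂ}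
    {α : Fin r → ℂ} (hz : ‖z‖ ≤ 1) (hα : ∀ j, (1 : ℝ) / 2 ≤ (s + α j).re)
    (hw : (1 : ℝ) / 2 ≤ w.re) :
    ‖∑ i, ∑ j ∈ Ici i, z ^ 2 * (p : ℂ) ^ (-(2 * s + 2 * w + α i + α j))‖
      ≤ r ^ 2 * (p : ℝ) ^ (-(3 / 2) : ℝ) := by
  refine (norm_sum_sum_Ici_le (B := (p : ℝ) ^ (-(3 / 2) : ℝ)) fun i j => ?_).trans_eq (by simp)
  rw [norm_mul, norm_pow]
  refine (mul_le_of_le_one_left (norm_nonneg _) (pow_le_one₀ (norm_nonneg z) hz)).trans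
    (norm_natCast_cpow_neg_le hp ?_)
  have hi := hα i
  have hj := hα j
  simp only [Complex.add_re, Complex.mul_re] at hi hj ⊢
  norm_num
  linarith

theorem FA_twisted_local_factor_estimate_general (r : ℕ) :
    ∃ C : ℝ, 0 < C ∧ ∀ (p : ℕ), p.Prime → ∀ (z : ℂ), ‖z‖ ≤ 1 →
      ∀ (s w : ℂ) (α : Fin r → ℂ),
      (∀ j, (1 : ℝ) / 2 ≤ (s + α j).re) → (1 : ℝ) / 2 ≤ w.re →
      ‖(2 / (Real.pi : ℂ)) * (∫ θ in (0:ℝ)..Real.pi,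
            (∏ j, (1 - 2 * (p : ℂ) ^ (-(s + α j)) * (Real.cos θ : ℂ)
                + ((p : ℂ) ^ (-(s + α j))) ^ 2)⁻¹) *
              (1 - 2 * z * (p : ℂ) ^ (-w) * (Real.cos θ : ℂ)
                + z ^ 2 * ((p : ℂ) ^ (-w)) ^ 2)⁻¹ * (Real.sin θ : ℂ) ^ 2)
          - 1 - (∑ i : Fin r, z * (p : ℂ) ^ (-(s + w + α i)))
          - (∑ i : Fin r, ∑ j ∈ Finset.Ioi i, (p : ℂ) ^ (-(2 * s + α i + α j)))
          - (∑ i : Fin r, ∑ j ∈ Finset.Ici i,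
              z ^ 2 * (p : ℂ) ^ (-(2 * s + 2 * w + α i + α j)))‖
        ≤ C * (p : ℝ) ^ (-(3 / 2) : ℝ) := by
  obtain ⟨K, hK, hest⟩ := exists_norm_integral_twisted_sub_le (Fin r)
  refine ⟨K + r ^ 2 + 1, by positivity, fun p hp z hz s w α hα hw => ?_⟩
  have hp0 : (p : ℂ) ≠ 0 := by exact_mod_cast hp.ne_zero
  set ε : ℝ := (p : ℝ) ^ (-(1 / 2) : ℝ)
  have hε3 : ε ^ 3 = (p : ℝ) ^ (-(3 / 2) : ℝ) := by
    rw [← rpow_natCast, ← rpow_mul (by positivity)]; norm_num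
  have hy : ‖z * (p : ℂ) ^ (-w)‖ ≤ ε := by
    rw [norm_mul]
    exact (mul_le_of_le_one_left (norm_nonneg _) hz).trans (norm_natCast_cpow_neg_le hp.one_le hw)
  have hmain := hest ε (by positivity) (rpow_neg_one_half_le (by exact_mod_cast hp.two_le)) _ _
    (fun j => norm_natCast_cpow_neg_le hp.one_le (hα j)) hy
  simp only [localFactor, mul_pow, ← mul_assoc, mul_sum] at hmain
  have htwist (i : Fin r) : z * (p : ℂ) ^ (-(s + w + α i))
      = z * (p : ℂ) ^ (-w) * (p : ℂ) ^ (-(s + α i)) := by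
    rw [cpow_neg_of_eq_add hp0 (by ring : s + w + α i = w + (s + α i)), mul_assoc]
  have hpair (i j : Fin r) : (p : ℂ) ^ (-(2 * s + α i + α j))
      = (p : ℂ) ^ (-(s + α i)) * (p : ℂ) ^ (-(s + α j)) := cpow_neg_of_eq_add hp0 (by ring)
  simp only [htwist, hpair]
  calc _ ≤ K * ε ^ 3 + r ^ 2 * ε ^ 3 := (norm_sub_le _ _).trans (add_le_add hmain
          ((norm_sum_sum_Ici_sq_mul_natCast_cpow_le hp.one_le hz hα hw).trans_eq (by rw [hε3])))
    _ ≤ (K + r ^ 2 + 1) * (p : ℝ) ^ (-(3 / 2) : ℝ) := by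
      rw [← hε3]; nlinarith [pow_nonneg (by positivity : (0 : ℝ) ≤ ε) 3]

/-- For every positive integer `r` there is `C = C(r) > 0` such that
for every prime `p`, every complex `z` with `|z| ≤ 1`, and all complex `s, w, α₁,…,α_r`
with `Re(s+α_j) ≥ 1/2` for all `j` and `Re(w) ≥ 1/2`, one has
`|(2/π) ∫₀^π ∏_j C(p^{-(s+α_j)};θ) · C(z p^{-w};θ) sin²θ dθ − 1 − ∑_i z p^{-(s+w+α_i)}
  − ∑_{i<j} p^{-(2s+α_i+α_j)} − ∑_{i≤j} z² p^{-(2s+2w+α_i+α_j)}| ≤ C p^{-3/2}`,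
where `C(X;θ) = (1 - 2X cos θ + X²)⁻¹`. -/
theorem FA_twisted_local_factor_estimate (r : ℕ) (hr : 0 < r) :
    ∃ C : ℝ, 0 < C ∧ ∀ (p : ℕ), p.Prime → ∀ (z : ℂ), ‖z‖ ≤ 1 →
      ∀ (s w : ℂ) (α : Fin r → ℂ),
      (∀ j, (1 : ℝ) / 2 ≤ (s + α j).re) → (1 : ℝ) / 2 ≤ w.re →
      ‖(2 / (Real.pi : ℂ)) * (∫ θ in (0:ℝ)..Real.pi,
            (∏ j, (1 - 2 * (p : ℂ) ^ (-(s + α j)) * (Real.cos θ : ℂ)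
                + ((p : ℂ) ^ (-(s + α j))) ^ 2)⁻¹) *
              (1 - 2 * z * (p : ℂ) ^ (-w) * (Real.cos θ : ℂ)
                + z ^ 2 * ((p : ℂ) ^ (-w)) ^ 2)⁻¹ * (Real.sin θ : ℂ) ^ 2)
          - 1 - (∑ i : Fin r, z * (p : ℂ) ^ (-(s + w + α i)))
          - (∑ i : Fin r, ∑ j ∈ Finset.Ioi i, (p : ℂ) ^ (-(2 * s + α i + α j)))
          - (∑ i : Fin r, ∑ j ∈ Finset.Ici i,
              z ^ 2 * (p : ℂ) ^ (-(2 * s + 2 * w + α i + α j)))‖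
        ≤ C * (p : ℝ) ^ (-(3 / 2) : ℝ) :=
  FA_twisted_local_factor_estimate_general r
end

section
/- Let x, y be nonzero complex numbers and ν ≥ 3 an integer. Then for every integer i with 1 ≤ i ≤ ν−2, one has (1 + x²/y²)·A_{i,ν} − (x/y)·A_{i−1,ν} − (x/y)·A_{i+1,ν} = 0. -/
/-!
With `r = y / x` and `s = x / y = r⁻¹`, the recurrence `(1 + s²) uᵢ = s (uᵢ₋₁ + uᵢ₊₁)` is the one
whose characteristic roots are `r` and `s`. Each of the three terms of `A_{i,ν}` satisfies it: `r^i`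
and `s^i` directly, and the tail term `s^i ∑_{c>i} r^{2c}` because peeling the first summand off the
sums for `i - 1` and `i` leaves `s^{i+2} r^{2i+2} - s^i r^{2i} = 0`. This needs `i + 1 ≤ ν`.
-/

noncomputable def Acoeff (x y : ℂ) (ν i : ℕ) : ℂ :=
  -y ^ 2 * (y / x) ^ i
    - (1 - x ^ 2) * (x / y) ^ i * (∑ c ∈ Finset.Icc (i + 1) ν, (y / x) ^ (2 * c))
    + (y ^ (2 * (ν + 1)) / x ^ (2 * ν)) * (x / y) ^ i

open Finset

lemma Finset.sum_Icc_eq_add_sum_Icc_succ {M : Type*} [AddCommMonoid M] (f : ℕ → M) {a b : ℕ}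
    (h : a ≤ b) : ∑ c ∈ Icc a b, f c = f a + ∑ c ∈ Icc (a + 1) b, f c := by
  rw [Icc_add_one_left_eq_Ioc, add_sum_Ioc_eq_sum_Icc h]

section ThreeTermRecurrence

variable {R : Type*} [CommRing R] {r s : R} {i : ℕ}

lemma pow_three_term_of_mul_eq_one (h : r * s = 1) (hi : 1 ≤ i) :
    (1 + s ^ 2) * r ^ i - s * r ^ (i - 1) - s * r ^ (i + 1) = 0 := by
  obtain ⟨j, rfl⟩ := Nat.exists_eq_add_of_le' hi
  simp only [Nat.add_sub_cancel]
  linear_combination (s * r ^ j - r ^ (j + 1)) * h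

lemma pow_three_term_self (hi : 1 ≤ i) :
    (1 + s ^ 2) * s ^ i - s * s ^ (i - 1) - s * s ^ (i + 1) = 0 := by
  obtain ⟨j, rfl⟩ := Nat.exists_eq_add_of_le' hi
  simp only [Nat.add_sub_cancel]
  ring

lemma tail_three_term_of_mul_eq_one (h : r * s = 1) {ν : ℕ} (hi1 : 1 ≤ i) (hi2 : i + 1 ≤ ν) :
    (1 + s ^ 2) * (s ^ i * ∑ c ∈ Icc (i + 1) ν, r ^ (2 * c))
      - s * (s ^ (i - 1) * ∑ c ∈ Icc (i - 1 + 1) ν, r ^ (2 * c))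
      - s * (s ^ (i + 1) * ∑ c ∈ Icc (i + 1 + 1) ν, r ^ (2 * c)) = 0 := by
  obtain ⟨j, rfl⟩ := Nat.exists_eq_add_of_le' hi1
  simp only [Nat.add_sub_cancel]
  rw [sum_Icc_eq_add_sum_Icc_succ _ (by omega : j + 1 ≤ ν),
    sum_Icc_eq_add_sum_Icc_succ _ (by omega : j + 1 + 1 ≤ ν)]
  linear_combination s ^ (j + 1) * r ^ (2 * (j + 1)) * (r * s + 1) * h

end ThreeTermRecurrence

theorem Acoeff_telescopic_general (x y : ℂ) (hx : x ≠ 0) (hy : y ≠ 0)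
    (ν : ℕ) (i : ℕ) (hi1 : 1 ≤ i) (hi2 : i ≤ ν - 2) :
    (1 + x ^ 2 / y ^ 2) * Acoeff x y ν i
      - (x / y) * Acoeff x y ν (i - 1) - (x / y) * Acoeff x y ν (i + 1) = 0 := by
  have h : y / x * (x / y) = 1 := by field_simp
  have hi : i + 1 ≤ ν := by omega
  unfold Acoeff
  linear_combination -y ^ 2 * pow_three_term_of_mul_eq_one h hi1
    - (1 - x ^ 2) * tail_three_term_of_mul_eq_one h hi1 hi
    + y ^ (2 * (ν + 1)) / x ^ (2 * ν) * pow_three_term_self (s := x / y) hi1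

/-- For nonzero complex `x, y`, an integer `ν ≥ 3` and `1 ≤ i ≤ ν−2`,
`(1 + x²/y²) A_{i,ν} − (x/y) A_{i−1,ν} − (x/y) A_{i+1,ν} = 0`. -/
theorem Acoeff_telescopic (x y : ℂ) (hx : x ≠ 0) (hy : y ≠ 0)
    (ν : ℕ) (hν : 3 ≤ ν) (i : ℕ) (hi1 : 1 ≤ i) (hi2 : i ≤ ν - 2) :
    (1 + x ^ 2 / y ^ 2) * Acoeff x y ν i
      - (x / y) * Acoeff x y ν (i - 1) - (x / y) * Acoeff x y ν (i + 1) = 0 :=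
  Acoeff_telescopic_general x y hx hy ν i hi1 hi2
end

section
/- Let t be a complex number, let x, y be nonzero complex numbers with x² ≠ 1, and let ν be a nonnegative integer. Then (x/y)^ν · { [1 + (1−x²)·∑_{c=1}^{ν} (y/x)^{2c} − y^{2(ν+1)}/x^{2ν}] + (1 − 2t(x/y) + (x/y)²)·[ −y²·∑_{c=1}^{ν} (y/x)^{c−1}·U_{c−1}(t) − (1−x²)·∑_{c=1}^{ν} (y/x)^{2c}·∑_{m=0}^{c−1} (x/y)^m·U_m(t) + (y^{2(ν+1)}/x^{2ν})·(x²/(1−x²))·(x/y)^ν·U_ν(t) + (y^{2(ν+1)}/x^{2ν})·∑_{m=0}^{ν} (x/y)^m·U_m(t) ] } = (1 − 2t·xy + x²y²)·(1−x²)⁻¹·U_ν(t). -/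
/-!
Everything reduces to the partial sums of the generating function of the `U_m`: by the
three-term recurrence,
`(1 - 2tz + z²) ∑_{m ≤ n} z^m U_m(t) = 1 - z^(n+1) U_{n+1}(t) + z^(n+2) U_n(t)`.
Apply this at `z = x/y` to the last sum, at `z = y/x` to the first one (note
`1 - 2t(x/y) + (x/y)² = (x/y)² (1 - 2t(y/x) + (y/x)²)`), and to each inner sum of the double
sum, which then telescopes. What is left is a rational identity in `x`, `y`, `t`, `(x/y)^ν`,
`U_ν(t)` and `U_{ν+1}(t)`.
-/

open Finset

namespace Polynomial.Chebyshev

variable {R : Type*} [CommRing R]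

theorem mul_sum_range_pow_mul_eval_U (t z : R) (n : ℕ) :
    (1 - 2 * t * z + z ^ 2) * ∑ m ∈ range (n + 1), z ^ m * (U R m).eval t
      = 1 - z ^ (n + 1) * (U R (n + 1)).eval t + z ^ (n + 2) * (U R n).eval t := by
  induction n with
  | zero => simp [U_one]; ring
  | succ n ih =>
    have hrec : (U R (n + 2)).eval t = 2 * t * (U R (n + 1)).eval t - (U R n).eval t := by
      simp [U_add_two]
    rw [sum_range_succ, mul_add, ih]
    push_cast
    rw [add_assoc (n : ℤ) 1 1, one_add_one_eq_two, hrec]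
    ring

theorem sum_Icc_pow_pred_mul_eval_U (t w : R) (n : ℕ) :
    ∑ c ∈ Icc 1 n, w ^ (c - 1) * (U R (c - 1)).eval t
      = ∑ m ∈ range n, w ^ m * (U R m).eval t := by
  rw [← Ico_add_one_right_eq_Icc, sum_Ico_eq_sum_range]
  simp [add_comm]

theorem mul_sum_Icc_pow_mul_sum_range_eval_U (t z w : R) (hzw : z * w = 1) (n : ℕ) :
    (1 - 2 * t * z + z ^ 2) *
        ∑ c ∈ Icc 1 n, w ^ (2 * c) * ∑ m ∈ range c, z ^ m * (U R m).eval t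
      = ∑ c ∈ Icc 1 n, w ^ (2 * c) + 1 - w ^ n * (U R n).eval t := by
  induction n with
  | zero => simp
  | succ n ih =>
    have hzw_pow (k : ℕ) : z ^ k * w ^ k = 1 := by rw [← mul_pow, hzw, one_pow]
    rw [sum_Icc_succ_top (by omega), sum_Icc_succ_top (by omega), mul_add, ih,
      mul_left_comm, mul_sum_range_pow_mul_eval_U]
    push_cast
    linear_combination w ^ (n + 1) * (z * (U R n).eval t - (U R (n + 1)).eval t) * hzw_pow (n + 1)
      + w ^ n * (U R n).eval t * hzw

end Polynomial.Chebyshev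

open Polynomial.Chebyshev

/-- The key identity \eqref{th1}: for complex `t`, nonzero complex
`x, y` with `x² ≠ 1` and any `ν : ℕ`,
`(x/y)^ν { [1 + (1−x²)∑_{c=1}^ν (y/x)^{2c} − y^{2(ν+1)}/x^{2ν}]
  + (1 − 2t(x/y) + (x/y)²)[ −y² ∑_{c=1}^ν (y/x)^{c−1} U_{c−1}(t)
    − (1−x²) ∑_{c=1}^ν (y/x)^{2c} ∑_{m=0}^{c−1} (x/y)^m U_m(t)
    + (y^{2(ν+1)}/x^{2ν})(x²/(1−x²))(x/y)^ν U_ν(t)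
    + (y^{2(ν+1)}/x^{2ν}) ∑_{m=0}^ν (x/y)^m U_m(t) ] }
 = (1 − 2txy + x²y²)(1−x²)⁻¹ U_ν(t)`,
where `U_m` is the Chebyshev polynomial of the second kind. -/
theorem one_swap_identity (t x y : ℂ) (hx : x ≠ 0) (hy : y ≠ 0) (hx1 : x ^ 2 ≠ 1)
    (ν : ℕ) :
    (x / y) ^ ν *
      ((1 + (1 - x ^ 2) * (∑ c ∈ Finset.Icc 1 ν, (y / x) ^ (2 * c))
          - y ^ (2 * (ν + 1)) / x ^ (2 * ν))
        + (1 - 2 * t * (x / y) + (x / y) ^ 2) *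
          (-y ^ 2 * (∑ c ∈ Finset.Icc 1 ν,
              (y / x) ^ (c - 1) * (Polynomial.Chebyshev.U ℂ (c - 1)).eval t)
            - (1 - x ^ 2) * (∑ c ∈ Finset.Icc 1 ν, (y / x) ^ (2 * c) *
                ∑ m ∈ Finset.range c, (x / y) ^ m * (Polynomial.Chebyshev.U ℂ m).eval t)
            + (y ^ (2 * (ν + 1)) / x ^ (2 * ν)) * (x ^ 2 / (1 - x ^ 2)) *
                (x / y) ^ ν * (Polynomial.Chebyshev.U ℂ ν).eval t
            + (y ^ (2 * (ν + 1)) / x ^ (2 * ν)) *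
                ∑ m ∈ Finset.range (ν + 1),
                  (x / y) ^ m * (Polynomial.Chebyshev.U ℂ m).eval t))
      = (1 - 2 * t * x * y + x ^ 2 * y ^ 2) * (1 - x ^ 2)⁻¹ *
          (Polynomial.Chebyshev.U ℂ ν).eval t := by
  have h1x : 1 - x ^ 2 ≠ 0 := sub_ne_zero.mpr hx1.symm
  have hLast := mul_sum_range_pow_mul_eval_U t (x / y) ν
  have hFirst := mul_sum_range_pow_mul_eval_U t (y / x) ν
  rw [sum_range_succ] at hFirst
  have hDouble := mul_sum_Icc_pow_mul_sum_range_eval_U t (x / y) (y / x) (by field_simp) ν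
  rw [sum_Icc_pow_pred_mul_eval_U]
  linear_combination (norm := skip) (x / y) ^ ν * (y ^ (2 * (ν + 1)) / x ^ (2 * ν)) * hLast
    - (x / y) ^ ν * (1 - x ^ 2) * hDouble - (x / y) ^ ν * y ^ 2 * (x / y) ^ 2 * hFirst
  -- leave `x ^ ν`, `y ^ ν` as the only powers with variable exponent, so `field_simp` clears them
  simp only [div_pow, pow_succ, pow_mul']
  field_simp
  ring
end

section
/- Let x, y be nonzero complex numbers with x² ≠ 1 and let ν ≥ 1 be an integer. Then (x/y)^ν · [ (1 + x²/y²)·A_{ν,ν} − (x/y)·A_{ν−1,ν} ] = (1 + x²y²)/(1 − x²). -/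
/-- The diagonal coefficient `A_{ν,ν} = (y²/(1−x²))(y/x)^ν`. -/
noncomputable def AcoeffDiag (x y : ℂ) (ν : ℕ) : ℂ :=
  (y ^ 2 / (1 - x ^ 2)) * (y / x) ^ ν

/-! Writing `r = x / y`, the sum defining `A_{ν−1,ν}` has the single term `r^{−2ν}`, and the
normalised coefficients collapse: `r^{ν+1} A_{ν−1,ν} = y² − 1` and `r^ν A_{ν,ν} = y² / (1 − x²)`.
The claim is then an identity of rational functions in `x` and `y`. -/

theorem div_pow_mul_AcoeffDiag {x y : ℂ} (hx : x ≠ 0) (hy : y ≠ 0) (ν : ℕ) :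
    (x / y) ^ ν * AcoeffDiag x y ν = y ^ 2 / (1 - x ^ 2) := by
  rw [AcoeffDiag, mul_left_comm, ← mul_pow, div_mul_div_cancel₀ hy, div_self hx, one_pow,
    mul_one]

theorem div_pow_mul_Acoeff_pred {x y : ℂ} (hx : x ≠ 0) (hy : y ≠ 0) (n : ℕ) :
    (x / y) ^ (n + 2) * Acoeff x y (n + 1) n = y ^ 2 - 1 := by
  have hx' : x = (x / y) * y := (div_mul_cancel₀ x hy).symm
  have hr : x / y ≠ 0 := div_ne_zero hx hy
  rw [Acoeff, Finset.Icc_self, Finset.sum_singleton, ← inv_div x y]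
  generalize x / y = r at hr hx' ⊢
  subst hx'
  -- every power of `r` is now a power of `r ^ n` times a fixed power of `r`
  simp only [inv_pow, mul_pow, pow_add, pow_mul']
  generalize hs : r ^ n = s
  have hs0 : s ≠ 0 := hs ▸ pow_ne_zero n hr
  field_simp
  ring

/-- For nonzero complex `x, y` with `x² ≠ 1` and an integer `ν ≥ 1`,
`(x/y)^ν [ (1 + x²/y²) A_{ν,ν} − (x/y) A_{ν−1,ν} ] = (1 + x²y²)/(1 − x²)`. -/
theorem coefficient_of_U_nu (x y : ℂ) (hx : x ≠ 0) (hy : y ≠ 0) (hx1 : x ^ 2 ≠ 1)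
    (ν : ℕ) (hν : 1 ≤ ν) :
    (x / y) ^ ν * ((1 + x ^ 2 / y ^ 2) * AcoeffDiag x y ν
        - (x / y) * Acoeff x y ν (ν - 1))
      = (1 + x ^ 2 * y ^ 2) / (1 - x ^ 2) := by
  obtain ⟨n, rfl⟩ := Nat.exists_eq_add_of_le' hν
  have h1 : 1 - x ^ 2 ≠ 0 := sub_ne_zero.mpr (Ne.symm hx1)
  calc (x / y) ^ (n + 1) * ((1 + x ^ 2 / y ^ 2) * AcoeffDiag x y (n + 1)
        - (x / y) * Acoeff x y (n + 1) (n + 1 - 1))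
      = (1 + x ^ 2 / y ^ 2) * ((x / y) ^ (n + 1) * AcoeffDiag x y (n + 1))
        - (x / y) ^ (n + 2) * Acoeff x y (n + 1) n := by
        rw [Nat.add_sub_cancel]; ring
    _ = (1 + x ^ 2 / y ^ 2) * (y ^ 2 / (1 - x ^ 2)) - (y ^ 2 - 1) := by
        rw [div_pow_mul_AcoeffDiag hx hy, div_pow_mul_Acoeff_pred hx hy]
    _ = (1 + x ^ 2 * y ^ 2) / (1 - x ^ 2) := by
        field_simp
        ring
end

section
/- Let x, y be nonzero complex numbers and let ν ≥ 2 be an integer. Then (x/y)^ν · [ A_ν + (1 + x²/y²)·A_{0,ν} − (x/y)·A_{1,ν} ] = 0. -/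
/-- The coefficient `A_ν = 1 + (1−x²) ∑_{c=1}^ν (y/x)^{2c} − y^{2(ν+1)}/x^{2ν}`. -/
noncomputable def Abig (x y : ℂ) (ν : ℕ) : ℂ :=
  1 + (1 - x ^ 2) * (∑ c ∈ Finset.Icc 1 ν, (y / x) ^ (2 * c))
    - y ^ (2 * (ν + 1)) / x ^ (2 * ν)

/-! The sums and the `y^{2(ν+1)}/x^{2ν}` terms cancel in `A_ν + A_{0,ν} = 1 - y²`, while in
`(x/y)² A_{i,ν} - (x/y) A_{i+1,ν}` the two sums differ only by the term `c = i + 1`, leaving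
`(y² - 1)(y/x)^i`. For `i = 0` the two contributions cancel. -/

theorem Abig_add_Acoeff_zero (x y : ℂ) (ν : ℕ) : Abig x y ν + Acoeff x y ν 0 = 1 - y ^ 2 := by
  simp only [Abig, Acoeff, pow_zero]
  ring

theorem sq_mul_Acoeff_sub_mul_Acoeff_succ {x y : ℂ} (hx : x ≠ 0) (hy : y ≠ 0) {ν i : ℕ}
    (hi : i < ν) :
    (x / y) ^ 2 * Acoeff x y ν i - x / y * Acoeff x y ν (i + 1) = (y ^ 2 - 1) * (y / x) ^ i := by
  rw [Acoeff, Acoeff, ← Finset.insert_Icc_add_one_left_eq_Icc hi,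
    Finset.sum_insert (by simp)]
  generalize ∑ c ∈ Finset.Icc (i + 1 + 1) ν, (y / x) ^ (2 * c) = S
  generalize y ^ (2 * (ν + 1)) / x ^ (2 * ν) = Y
  simp only [div_pow]
  field_simp
  ring

/-- For nonzero complex `x, y` and an integer `ν ≥ 2`,
`(x/y)^ν [ A_ν + (1 + x²/y²) A_{0,ν} − (x/y) A_{1,ν} ] = 0`. -/
theorem constant_term_vanishes (x y : ℂ) (hx : x ≠ 0) (hy : y ≠ 0)
    (ν : ℕ) (hν : 2 ≤ ν) :
    (x / y) ^ ν * (Abig x y ν + (1 + x ^ 2 / y ^ 2) * Acoeff x y ν 0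
        - (x / y) * Acoeff x y ν 1) = 0 := by
  have hsum := Abig_add_Acoeff_zero x y ν
  have hdiff := sq_mul_Acoeff_sub_mul_Acoeff_succ hx hy (i := 0) (by omega : 0 < ν)
  rw [← div_pow]
  linear_combination (x / y) ^ ν * (hsum + hdiff)
end
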